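/- Fix an integer n ≥ 2. For a positive integer M, let I(M) be the integral over x from 0 to 1 of [ x^{-2}(1 - (1-x)^M) - x^{-1} M (1-x)^{M-1} ] · n x (1-x)^{n-1} dx. Then I(M)/log M converges to n as M → ∞. -/

import Mathlib

/-!
Multiplied by `x`, the density becomes the polynomial `∑_{k<M} (1-x)^k - M (1-x)^(M-1)` in `1 - x`,
so integrating it against `x (1-x)^(n-1)` is exact:
`I(M) = n (H_{n-1+M} - H_{n-1} - M / (n-1+M))`, which is `n log M + O(1)`.
-/

open Filter Finset Real

lemma integral_one_sub_pow (j : ℕ) : ∫ x in (0:ℝ)..1, (1 - x) ^ j = 1 / ((j : ℝ) + 1) := by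
  rw [intervalIntegral.integral_comp_sub_left (fun x : ℝ => x ^ j)]
  norm_num [integral_pow]

lemma harmonic_add_sub_harmonic (a M : ℕ) :
    harmonic (a + M) - harmonic a = ∑ k ∈ range M, ((a : ℚ) + k + 1)⁻¹ := by
  simp only [harmonic, sum_range_add, add_sub_cancel_left]
  push_cast
  simp only [add_assoc]

lemma truncated_sfs_density_mul_self (M : ℕ) {x : ℝ} (hx : x ≠ 0) :
    (x⁻¹ ^ 2 * (1 - (1 - x) ^ M) - x⁻¹ * M * (1 - x) ^ (M - 1)) * x
      = ∑ k ∈ range M, (1 - x) ^ k - M * (1 - x) ^ (M - 1) := by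
  have hgeom : 1 - (1 - x) ^ M = (∑ k ∈ range M, (1 - x) ^ k) * x := by
    linear_combination geom_sum_mul (1 - x) M
  rw [hgeom]
  field_simp

lemma tendsto_div_log_of_tendsto_sub_log {u : ℕ → ℝ} {c : ℝ}
    (h : Tendsto (fun M => u M - log M) atTop (nhds c)) :
    Tendsto (fun M => u M / log M) atTop (nhds 1) := by
  have hlog : Tendsto (fun M : ℕ => log M) atTop atTop :=
    tendsto_log_atTop.comp tendsto_natCast_atTop_atTop
  have := (h.div_atTop hlog).add_const 1
  rw [zero_add] at this
  refine this.congr' ?_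
  filter_upwards [hlog.eventually_gt_atTop 0] with M hM
  field_simp
  ring

lemma tendsto_harmonic_add_sub_log (a : ℕ) :
    Tendsto (fun M : ℕ => (harmonic (a + M) : ℝ) - log M) atTop (nhds eulerMascheroniConstant) := by
  have hshift : Tendsto (fun M : ℕ => log ((a + M : ℕ) : ℝ) - log M) atTop (nhds 0) := by
    refine ((tendsto_log_comp_add_sub_log a).comp tendsto_natCast_atTop_atTop).congr fun M => ?_
    simp [add_comm]
  have hadd : Tendsto (fun M : ℕ => a + M) atTop atTop := by
    simpa only [add_comm] using tendsto_add_atTop_nat a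
  simpa using (tendsto_harmonic_sub_log.comp hadd).add hshift

lemma integral_truncated_sfs_density_mul (M a : ℕ) :
    ∫ x in (0:ℝ)..1,
        (x⁻¹ ^ 2 * (1 - (1 - x) ^ M) - x⁻¹ * M * (1 - x) ^ (M - 1)) * (x * (1 - x) ^ a)
      = ((harmonic (a + M) - harmonic a : ℚ) : ℝ) - M / (a + M) := by
  have hpoly : ∫ x in (0:ℝ)..1,
        (x⁻¹ ^ 2 * (1 - (1 - x) ^ M) - x⁻¹ * M * (1 - x) ^ (M - 1)) * (x * (1 - x) ^ a)
      = ∫ x in (0:ℝ)..1,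
          (∑ k ∈ range M, (1 - x) ^ (a + k)) - M * (1 - x) ^ (a + (M - 1)) := by
    refine intervalIntegral.integral_congr_ae (Eventually.of_forall fun x hx => ?_)
    have hx0 : x ≠ 0 := (by simpa using hx : 0 < x ∧ x ≤ 1).1.ne'
    simp only [pow_add, ← mul_sum]
    linear_combination (1 - x) ^ a * truncated_sfs_density_mul_self M hx0
  have integrable (f : ℝ → ℝ) (hf : Continuous f := by fun_prop) :
      IntervalIntegrable f MeasureTheory.volume 0 1 :=
    hf.intervalIntegrable 0 1
  rw [hpoly, intervalIntegral.integral_sub (integrable _) (integrable _),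
    intervalIntegral.integral_finsetSum fun _ _ => integrable _,
    intervalIntegral.integral_const_mul, harmonic_add_sub_harmonic]
  simp only [integral_one_sub_pow]
  rcases Nat.eq_zero_or_pos M with rfl | hM
  · simp
  · push_cast [Nat.cast_sub hM]
    ring_nf

theorem integral_singleton_density_asymptotic_general (n : ℕ) :
    Tendsto
      (fun M : ℕ =>
        (∫ x in (0:ℝ)..1,
            (x⁻¹ ^ 2 * (1 - (1 - x) ^ M) - x⁻¹ * M * (1 - x) ^ (M - 1)) *
              (n * x * (1 - x) ^ (n - 1))) / Real.log M)
      atTop (nhds n) := by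
  let u : ℕ → ℝ := fun M =>
    ((harmonic (n - 1 + M) - harmonic (n - 1) : ℚ) : ℝ) - M / ((n - 1 : ℕ) + M)
  have hu : Tendsto (fun M => u M - log M) atTop
      (nhds (eulerMascheroniConstant - harmonic (n - 1) - 1)) := by
    have hratio := tendsto_natCast_div_add_atTop (((n - 1 : ℕ) : ℝ))
    refine (((tendsto_harmonic_add_sub_log (n - 1)).sub_const _).sub hratio).congr fun M => ?_
    simp only [u, add_comm (M : ℝ)]
    push_cast
    ring
  have hI (M : ℕ) : (∫ x in (0:ℝ)..1,
      (x⁻¹ ^ 2 * (1 - (1 - x) ^ M) - x⁻¹ * M * (1 - x) ^ (M - 1)) *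
        (n * x * (1 - x) ^ (n - 1))) = n * u M := by
    simp only [u, ← integral_truncated_sfs_density_mul, ← intervalIntegral.integral_const_mul]
    congr 1 with x
    ring
  simpa only [hI, mul_div_assoc, mul_one] using
    (tendsto_div_log_of_tendsto_sub_log hu).const_mul (n : ℝ)

/-- For fixed `n ≥ 2`, with
`I(M) = ∫_0^1 [x⁻²(1-(1-x)^M) - x⁻¹ M (1-x)^(M-1)] · n x (1-x)^(n-1) dx`,
the ratio `I(M)/log M` converges to `n` as `M → ∞`. -/
theorem integral_singleton_density_asymptotic (n : ℕ) (hn : 2 ≤ n) :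
    Tendsto
      (fun M : ℕ =>
        (∫ x in (0:ℝ)..1,
            (x⁻¹ ^ 2 * (1 - (1 - x) ^ M) - x⁻¹ * M * (1 - x) ^ (M - 1)) *
              (n * x * (1 - x) ^ (n - 1))) / Real.log M)
      atTop (nhds n) :=
  integral_singleton_density_asymptotic_general n
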